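/- Let s ∈ (2,3] and p_{00}, p_{11} ∈ (0,1). Then for all (τ_0,τ_1), (ρ_0,ρ_1) ∈ M², the components T_0, T_1 of T satisfy ζ_s(T_0(τ_0,τ_1), T_0(ρ_0,ρ_1)) ≤ p_{00}^{s/2} ζ_s(τ_0,ρ_0) + (1 − p_{00})^{s/2} ζ_s(τ_1,ρ_1) and ζ_s(T_1(τ_0,τ_1), T_1(ρ_0,ρ_1)) ≤ (1 − p_{11})^{s/2} ζ_s(τ_0,ρ_0) + p_{11}^{s/2} ζ_s(τ_1,ρ_1). -/

import Mathlib

open MeasureTheory ProbabilityTheory Real Filter Topology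

noncomputable section

/-- The class `F_s` of test functions for the Zolotarev metric `ζ_s`, `2 < s ≤ 3`:
twice continuously differentiable functions whose second derivative is Hölder
continuous of order `s - 2` with constant `1`. -/
def zolotarevF (s : ℝ) : Set (ℝ → ℝ) :=
  {f | ContDiff ℝ 2 f ∧
    ∀ x y : ℝ, |iteratedDeriv 2 f x - iteratedDeriv 2 f y| ≤ |x - y| ^ (s - 2)}

/-- The Zolotarev distance `ζ_s(τ, ρ) = sup_{f ∈ F_s} |∫ f dτ - ∫ f dρ|`. -/
def zolotarevDist (s : ℝ) (τ ρ : Measure ℝ) : ℝ :=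
  sSup {r : ℝ | ∃ f ∈ zolotarevF s, r = |(∫ x, f x ∂τ) - ∫ x, f x ∂ρ|}

/-- Membership in `M_s(0,1)`: Borel probability measures on `ℝ` with mean `0`,
variance `1` and finite absolute moment of order `s`. -/
def MemMs (s : ℝ) (τ : Measure ℝ) : Prop :=
  IsProbabilityMeasure τ ∧ (∫ x, x ∂τ) = 0 ∧ (∫ x, x ^ 2 ∂τ) = 1 ∧
    Integrable (fun x => |x| ^ s) τ

/-- The map `T` on pairs of probability measures:
`T(τ_0, τ_1) = (L(√p_{00} W^0 + √(1-p_{00}) W^1), L(√(1-p_{11}) W^0 + √p_{11} W^1))`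
with `W^0 ∼ τ_0`, `W^1 ∼ τ_1` independent. -/
def Tmap (p00 p11 : ℝ) (τ : Measure ℝ × Measure ℝ) : Measure ℝ × Measure ℝ :=
  ((τ.1.prod τ.2).map fun z => Real.sqrt p00 * z.1 + Real.sqrt (1 - p00) * z.2,
   (τ.1.prod τ.2).map fun z => Real.sqrt (1 - p11) * z.1 + Real.sqrt p11 * z.2)

/-- The metric `ζ_s^∨` on pairs. -/
def zolotarevDistMax (s : ℝ) (τ ρ : Measure ℝ × Measure ℝ) : ℝ :=
  max (zolotarevDist s τ.1 ρ.1) (zolotarevDist s τ.2 ρ.2)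

/-! The Zolotarev distance is `(s, +)`-ideal. If `f ∈ F_s` and `a > 0`, then
`x ↦ a ^ (-s) * f (a * x + c)` is again in `F_s`, so conditioning on the other independent summand
gives `|E f(aX + bY) - E f(aX' + bY)| ≤ a ^ s ζ_s(X, X')`; replacing the two summands one at a time
yields `ζ_s(aX + bY, aX' + bY') ≤ a ^ s ζ_s(X, X') + b ^ s ζ_s(Y, Y')`, and `a = √p` turns
`a ^ s` into `p ^ (s / 2)`. The suprema involved are finite on `M_s(0,1)`: measures with equal
first two moments integrate the quadratic Taylor polynomial of `f` at `0` to the same value, and the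
Hölder bound on `f''` makes the Taylor remainder at most `|x| ^ s`. -/

lemma abs_le_rpow_add_one_of_hasDerivAt {g g' : ℝ → ℝ} {r : ℝ} (hr : 0 ≤ r)
    (hg : ∀ t, HasDerivAt g (g' t) t) (hg0 : g 0 = 0) (hg' : ∀ t, |g' t| ≤ |t| ^ r) (x : ℝ) :
    |g x| ≤ |x| ^ (r + 1) := by
  have hbound : ∀ t ∈ Set.uIcc 0 x, ‖g' t‖ ≤ |x| ^ r := fun t ht =>
    (hg' t).trans <| rpow_le_rpow (abs_nonneg t)
      (by simpa using Set.abs_sub_left_of_mem_uIcc ht) hr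
  have hmvt := Convex.norm_image_sub_le_of_norm_hasDerivWithin_le
    (fun t _ => (hg t).hasDerivWithinAt) hbound (convex_uIcc 0 x) Set.left_mem_uIcc
    Set.right_mem_uIcc
  rw [rpow_add_one' (abs_nonneg x) (by linarith)]
  simpa [hg0] using hmvt

lemma rpow_le_one_add_rpow {x p q : ℝ} (hx : 0 ≤ x) (hp : 0 ≤ p) (hpq : p ≤ q) :
    x ^ p ≤ 1 + x ^ q := by
  rcases le_total x 1 with hx1 | hx1
  · linarith [rpow_le_one hx hx1 hp, rpow_nonneg hx q]
  · linarith [rpow_le_rpow_of_exponent_le hx1 hpq]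

lemma memLp_id_of_integrable_rpow_abs {s : ℝ} (hs : 0 < s) {μ : Measure ℝ}
    (hμ : Integrable (fun x => |x| ^ s) μ) : MemLp id (ENNReal.ofReal s) μ := by
  rw [← integrable_norm_rpow_iff aestronglyMeasurable_id (by simpa using hs) (by simp),
    ENNReal.toReal_ofReal hs.le]
  simpa using hμ

lemma integrable_rpow_abs_linear_prod {s : ℝ} (hs : 0 < s) {μ κ : Measure ℝ}
    [IsFiniteMeasure μ] [IsFiniteMeasure κ] (hμ : Integrable (fun x => |x| ^ s) μ)
    (hκ : Integrable (fun x => |x| ^ s) κ) (a b : ℝ) :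
    Integrable (fun z : ℝ × ℝ => |a * z.1 + b * z.2| ^ s) (μ.prod κ) := by
  have hLp := (((memLp_id_of_integrable_rpow_abs hs hμ).const_mul a).comp_fst κ).add
    (((memLp_id_of_integrable_rpow_abs hs hκ).const_mul b).comp_snd μ)
  simpa [ENNReal.toReal_ofReal hs.le] using
    hLp.integrable_norm_rpow (by simpa using hs) (by simp)

lemma iteratedDeriv_comp_affine {f : ℝ → ℝ} {n : ℕ} (hf : ContDiff ℝ n f) (a c : ℝ) :
    iteratedDeriv n (fun x => f (a * x + c)) = fun x => a ^ n * iteratedDeriv n f (a * x + c) := by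
  rw [iteratedDeriv_comp_const_mul (f := fun y => f (y + c)) (hf.comp (contDiff_id.add
    contDiff_const)), iteratedDeriv_comp_add_const]

section zolotarevF

variable {s : ℝ} {f : ℝ → ℝ}

lemma zero_mem_zolotarevF : (fun _ : ℝ => (0 : ℝ)) ∈ zolotarevF s :=
  ⟨contDiff_const, fun x y => by simpa using rpow_nonneg (abs_nonneg (x - y)) (s - 2)⟩

lemma rpow_neg_mul_comp_affine_mem_zolotarevF (hf : f ∈ zolotarevF s) {a : ℝ} (ha : 0 < a)
    (c : ℝ) : (fun x => a ^ (-s) * f (a * x + c)) ∈ zolotarevF s := by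
  have hcomp : ContDiff ℝ 2 fun x => f (a * x + c) :=
    hf.1.comp ((contDiff_const.mul contDiff_id).add contDiff_const)
  have hderiv : ∀ x, iteratedDeriv 2 (fun x => a ^ (-s) * f (a * x + c)) x
      = a ^ (2 - s) * iteratedDeriv 2 f (a * x + c) := fun x => by
    rw [iteratedDeriv_const_mul _ hcomp.contDiffAt, iteratedDeriv_comp_affine hf.1,
      sub_eq_add_neg, rpow_add ha, rpow_two]
    ring
  refine ⟨contDiff_const.mul hcomp, fun x y => ?_⟩
  have hHolder := hf.2 (a * x + c) (a * y + c)
  rw [show a * x + c - (a * y + c) = a * (x - y) by ring, abs_mul, abs_of_pos ha,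
    mul_rpow ha.le (abs_nonneg _)] at hHolder
  calc |iteratedDeriv 2 (fun x => a ^ (-s) * f (a * x + c)) x
        - iteratedDeriv 2 (fun x => a ^ (-s) * f (a * x + c)) y|
      = a ^ (2 - s) * |iteratedDeriv 2 f (a * x + c) - iteratedDeriv 2 f (a * y + c)| := by
        rw [hderiv, hderiv, ← mul_sub, abs_mul, abs_of_pos (rpow_pos_of_pos ha _)]
    _ ≤ a ^ (2 - s) * (a ^ (s - 2) * |x - y| ^ (s - 2)) := by gcongr
    _ = |x - y| ^ (s - 2) := by
        rw [← mul_assoc, ← rpow_add ha, show 2 - s + (s - 2) = 0 by ring, rpow_zero, one_mul]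

def taylorQuadratic (f : ℝ → ℝ) (x : ℝ) : ℝ :=
  f 0 + deriv f 0 * x + iteratedDeriv 2 f 0 * x ^ 2 / 2

lemma abs_sub_taylorQuadratic_le (hs : 2 ≤ s) (hf : f ∈ zolotarevF s) (x : ℝ) :
    |f x - taylorQuadratic f x| ≤ |x| ^ s := by
  set f₂ := iteratedDeriv 2 f
  have hdf : Differentiable ℝ f := hf.1.differentiable (by norm_num)
  have hdf' : Differentiable ℝ (deriv f) := by
    simpa using hf.1.differentiable_iteratedDeriv 1 (by norm_num)
  have hf₂ : deriv (deriv f) = f₂ := by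
    simp only [f₂, iteratedDeriv_succ, iteratedDeriv_zero]
  have hfirst : ∀ t, |deriv f t - deriv f 0 - f₂ 0 * t| ≤ |t| ^ (s - 1) := by
    have hderiv (u : ℝ) :
        HasDerivAt (fun t => deriv f t - deriv f 0 - f₂ 0 * t) (f₂ u - f₂ 0) u := by
      rw [← hf₂]
      exact (((hdf' u).hasDerivAt.sub_const _).fun_sub
        ((hasDerivAt_id u).const_mul _)).congr_deriv (by simp)
    intro t
    simpa [show s - 2 + 1 = s - 1 by ring] using abs_le_rpow_add_one_of_hasDerivAt
      (sub_nonneg.2 hs) hderiv (by simp) (fun u => by simpa using hf.2 u 0) t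
  have hpoly (t : ℝ) : HasDerivAt (taylorQuadratic f) (deriv f 0 + f₂ 0 * t) t := by
    have := (((hasDerivAt_id t).const_mul (deriv f 0)).const_add (f 0)).fun_add
      (((hasDerivAt_pow 2 t).const_mul (f₂ 0)).div_const 2)
    exact this.congr_deriv (by simp only [mul_one, Nat.cast_ofNat]; ring)
  have hremainder (t : ℝ) : HasDerivAt (fun t => f t - taylorQuadratic f t)
      (deriv f t - deriv f 0 - f₂ 0 * t) t :=
    ((hdf t).hasDerivAt.fun_sub (hpoly t)).congr_deriv (by ring)
  simpa using abs_le_rpow_add_one_of_hasDerivAt (by linarith) hremainder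
    (by simp [taylorQuadratic]) hfirst x

lemma exists_abs_le_mul_one_add_rpow (hs : 2 ≤ s) (hf : f ∈ zolotarevF s) :
    ∃ C, ∀ x, |f x| ≤ C * (1 + |x| ^ s) := by
  refine ⟨|f 0| + |deriv f 0| + |iteratedDeriv 2 f 0| + 1, fun x => ?_⟩
  have hlin : |x| ≤ 1 + |x| ^ s := by
    simpa using rpow_le_one_add_rpow (abs_nonneg x) zero_le_one (by linarith : (1 : ℝ) ≤ s)
  have hsq : x ^ 2 ≤ 1 + |x| ^ s := by
    simpa [rpow_two] using rpow_le_one_add_rpow (abs_nonneg x) zero_le_two hs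
  have hpoly :
      |taylorQuadratic f x| ≤ |f 0| + |deriv f 0| * |x| + |iteratedDeriv 2 f 0| * x ^ 2 := by
    unfold taylorQuadratic
    calc _ ≤ |f 0| + |deriv f 0 * x| + |iteratedDeriv 2 f 0 * x ^ 2 / 2| := abs_add_three _ _ _
      _ ≤ _ := by
        rw [abs_mul, abs_div, abs_mul, abs_two, abs_pow, sq_abs]
        nlinarith [abs_nonneg (iteratedDeriv 2 f 0), sq_nonneg x]
  have hrem := abs_sub_taylorQuadratic_le hs hf x
  have hfx : |f x| ≤ |f x - taylorQuadratic f x| + |taylorQuadratic f x| := by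
    simpa using abs_add_le (f x - taylorQuadratic f x) (taylorQuadratic f x)
  nlinarith [abs_nonneg (f 0), abs_nonneg (deriv f 0), abs_nonneg (iteratedDeriv 2 f 0),
    rpow_nonneg (abs_nonneg x) s]

lemma integrable_of_mem_zolotarevF (hs : 2 ≤ s) (hf : f ∈ zolotarevF s) {μ : Measure ℝ}
    [IsFiniteMeasure μ] (hμ : Integrable (fun x => |x| ^ s) μ) : Integrable f μ := by
  obtain ⟨C, hC⟩ := exists_abs_le_mul_one_add_rpow hs hf
  exact (((integrable_const 1).add hμ).const_mul C).mono' hf.1.continuous.aestronglyMeasurable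
    (ae_of_all _ hC)

lemma integrable_comp_linear_prod (hs : 2 ≤ s) (hf : f ∈ zolotarevF s) {μ κ : Measure ℝ}
    [IsFiniteMeasure μ] [IsFiniteMeasure κ] (hμ : Integrable (fun x => |x| ^ s) μ)
    (hκ : Integrable (fun x => |x| ^ s) κ) (a b : ℝ) :
    Integrable (fun z : ℝ × ℝ => f (a * z.1 + b * z.2)) (μ.prod κ) := by
  obtain ⟨C, hC⟩ := exists_abs_le_mul_one_add_rpow hs hf
  have hbound := ((integrable_const 1).add
    (integrable_rpow_abs_linear_prod (by linarith) hμ hκ a b)).const_mul C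
  exact hbound.mono' (hf.1.continuous.comp (by fun_prop)).aestronglyMeasurable
    (ae_of_all _ fun z => hC _)

end zolotarevF

namespace MemMs

variable {s : ℝ} {μ : Measure ℝ}

lemma integrable_sq (hμ : MemMs s μ) : Integrable (fun x => x ^ 2) μ := by
  -- otherwise the integral would be the junk value `0`, not `1`
  by_contra h
  simpa [integral_undef h] using hμ.2.2.1

lemma integrable_id (hμ : MemMs s μ) : Integrable (fun x : ℝ => x) μ :=
  have := hμ.1
  ((memLp_two_iff_integrable_sq aestronglyMeasurable_id).2 hμ.integrable_sq).integrable
    one_le_two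

lemma integrable_taylorQuadratic (hμ : MemMs s μ) (f : ℝ → ℝ) :
    Integrable (taylorQuadratic f) μ :=
  have := hμ.1
  ((integrable_const _).add (hμ.integrable_id.const_mul _)).add
    ((hμ.integrable_sq.const_mul _).div_const _)

lemma integral_taylorQuadratic (hμ : MemMs s μ) (f : ℝ → ℝ) :
    ∫ x, taylorQuadratic f x ∂μ = f 0 + iteratedDeriv 2 f 0 / 2 := by
  have := hμ.1
  have hlin : Integrable (fun x => f 0 + deriv f 0 * x) μ :=
    (integrable_const _).add (hμ.integrable_id.const_mul _)
  have hquad : Integrable (fun x => iteratedDeriv 2 f 0 * x ^ 2 / 2) μ :=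
    (hμ.integrable_sq.const_mul _).div_const _
  unfold taylorQuadratic
  rw [integral_add hlin hquad, integral_add (integrable_const _) (hμ.integrable_id.const_mul _),
    integral_const_mul, integral_div, integral_const_mul, hμ.2.1, hμ.2.2.1]
  simp

end MemMs

section zolotarevDist

variable {s : ℝ} {f : ℝ → ℝ} {μ ν : Measure ℝ}

lemma zolotarevDist_le_of_forall {C : ℝ}
    (h : ∀ f ∈ zolotarevF s, |(∫ x, f x ∂μ) - ∫ x, f x ∂ν| ≤ C) : zolotarevDist s μ ν ≤ C :=
  csSup_le ⟨_, _, zero_mem_zolotarevF, rfl⟩ (by rintro _ ⟨f, hf, rfl⟩; exact h f hf)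

lemma abs_integral_sub_integral_le (hs : 2 ≤ s) (hf : f ∈ zolotarevF s) (hμ : MemMs s μ)
    (hν : MemMs s ν) :
    |(∫ x, f x ∂μ) - ∫ x, f x ∂ν| ≤ (∫ x, |x| ^ s ∂μ) + ∫ x, |x| ^ s ∂ν := by
  have hremainder : ∀ ρ : Measure ℝ, MemMs s ρ →
      |(∫ x, f x ∂ρ) - (f 0 + iteratedDeriv 2 f 0 / 2)| ≤ ∫ x, |x| ^ s ∂ρ := by
    intro ρ hρ
    have := hρ.1
    rw [← hρ.integral_taylorQuadratic f, ← integral_sub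
      (integrable_of_mem_zolotarevF hs hf hρ.2.2.2) (hρ.integrable_taylorQuadratic f)]
    exact (abs_integral_le_integral_abs).trans
      (integral_mono_of_nonneg (ae_of_all _ fun _ => abs_nonneg _) hρ.2.2.2
        (ae_of_all _ (abs_sub_taylorQuadratic_le hs hf)))
  have hμR := hremainder μ hμ
  have hνR := hremainder ν hν
  rw [abs_sub_comm] at hνR
  linarith [abs_sub_le (∫ x, f x ∂μ) (f 0 + iteratedDeriv 2 f 0 / 2) (∫ x, f x ∂ν)]

lemma abs_integral_sub_le_zolotarevDist (hs : 2 ≤ s) (hf : f ∈ zolotarevF s)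
    (hμ : MemMs s μ) (hν : MemMs s ν) :
    |(∫ x, f x ∂μ) - ∫ x, f x ∂ν| ≤ zolotarevDist s μ ν :=
  le_csSup ⟨_, by rintro _ ⟨g, hg, rfl⟩; exact abs_integral_sub_integral_le hs hg hμ hν⟩
    ⟨f, hf, rfl⟩

lemma abs_integral_comp_affine_sub_le (hs : 2 ≤ s) (hf : f ∈ zolotarevF s) (hμ : MemMs s μ)
    (hν : MemMs s ν) {a : ℝ} (ha : 0 < a) (c : ℝ) :
    |(∫ x, f (a * x + c) ∂μ) - ∫ x, f (a * x + c) ∂ν| ≤ a ^ s * zolotarevDist s μ ν := by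
  have h := abs_integral_sub_le_zolotarevDist hs
    (rpow_neg_mul_comp_affine_mem_zolotarevF hf ha c) hμ hν
  rwa [integral_const_mul, integral_const_mul, ← mul_sub, abs_mul,
    abs_of_pos (rpow_pos_of_pos ha _), rpow_neg ha.le, inv_mul_le_iff₀ (rpow_pos_of_pos ha _)]
    at h

end zolotarevDist

section linearCombination

variable {s : ℝ} {f : ℝ → ℝ} {μ ν κ : Measure ℝ}

lemma abs_integral_prod_sub_le_left (hs : 2 ≤ s) (hf : f ∈ zolotarevF s) (hμ : MemMs s μ)
    (hν : MemMs s ν) [IsProbabilityMeasure κ] (hκ : Integrable (fun x => |x| ^ s) κ)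
    {a : ℝ} (ha : 0 < a) (b : ℝ) :
    |(∫ z, f (a * z.1 + b * z.2) ∂μ.prod κ) - ∫ z, f (a * z.1 + b * z.2) ∂ν.prod κ|
      ≤ a ^ s * zolotarevDist s μ ν := by
  have := hμ.1
  have := hν.1
  have hintμ := integrable_comp_linear_prod hs hf hμ.2.2.2 hκ a b
  have hintν := integrable_comp_linear_prod hs hf hν.2.2.2 hκ a b
  rw [integral_prod_symm _ hintμ, integral_prod_symm _ hintν,
    ← integral_sub hintμ.integral_prod_right hintν.integral_prod_right]
  simpa using norm_integral_le_of_norm_le_const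
    (f := fun y => (∫ x, f (a * x + b * y) ∂μ) - ∫ x, f (a * x + b * y) ∂ν)
    (ae_of_all κ fun y => abs_integral_comp_affine_sub_le hs hf hμ hν ha (b * y))

lemma abs_integral_prod_sub_le_right (hs : 2 ≤ s) (hf : f ∈ zolotarevF s) (hμ : MemMs s μ)
    (hν : MemMs s ν) [IsProbabilityMeasure κ] (hκ : Integrable (fun x => |x| ^ s) κ)
    (a : ℝ) {b : ℝ} (hb : 0 < b) :
    |(∫ z, f (a * z.1 + b * z.2) ∂κ.prod μ) - ∫ z, f (a * z.1 + b * z.2) ∂κ.prod ν|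
      ≤ b ^ s * zolotarevDist s μ ν := by
  have := hμ.1
  have := hν.1
  have hintμ := integrable_comp_linear_prod hs hf hκ hμ.2.2.2 a b
  have hintν := integrable_comp_linear_prod hs hf hκ hν.2.2.2 a b
  rw [integral_prod _ hintμ, integral_prod _ hintν,
    ← integral_sub hintμ.integral_prod_left hintν.integral_prod_left]
  simpa [add_comm] using norm_integral_le_of_norm_le_const
    (f := fun x => (∫ y, f (b * y + a * x) ∂μ) - ∫ y, f (b * y + a * x) ∂ν)
    (ae_of_all κ fun x => abs_integral_comp_affine_sub_le hs hf hμ hν hb (a * x))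

lemma zolotarevDist_map_linear_prod_le (hs : 2 ≤ s) {μ₀ μ₁ ν₀ ν₁ : Measure ℝ}
    (hμ₀ : MemMs s μ₀) (hμ₁ : MemMs s μ₁) (hν₀ : MemMs s ν₀) (hν₁ : MemMs s ν₁)
    {a b : ℝ} (ha : 0 < a) (hb : 0 < b) :
    zolotarevDist s ((μ₀.prod μ₁).map fun z => a * z.1 + b * z.2)
        ((ν₀.prod ν₁).map fun z => a * z.1 + b * z.2)
      ≤ a ^ s * zolotarevDist s μ₀ ν₀ + b ^ s * zolotarevDist s μ₁ ν₁ := by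
  have := hμ₁.1
  have := hν₀.1
  refine zolotarevDist_le_of_forall fun f hf => ?_
  have hφ : Measurable fun z : ℝ × ℝ => a * z.1 + b * z.2 := by fun_prop
  rw [integral_map hφ.aemeasurable hf.1.continuous.aestronglyMeasurable,
    integral_map hφ.aemeasurable hf.1.continuous.aestronglyMeasurable]
  calc _ ≤ |(∫ z, f (a * z.1 + b * z.2) ∂μ₀.prod μ₁) - ∫ z, f (a * z.1 + b * z.2) ∂ν₀.prod μ₁|
        + |(∫ z, f (a * z.1 + b * z.2) ∂ν₀.prod μ₁) - ∫ z, f (a * z.1 + b * z.2) ∂ν₀.prod ν₁| :=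
        abs_sub_le _ _ _
    _ ≤ _ := add_le_add (abs_integral_prod_sub_le_left hs hf hμ₀ hν₀ hμ₁.2.2.2 ha b)
        (abs_integral_prod_sub_le_right hs hf hμ₁ hν₁ hν₀.2.2.2 a hb)

end linearCombination

/-- componentwise contraction estimates for `T`: for `s ∈ (2,3]`
and `p_{00}, p_{11} ∈ (0,1)`, on `M²` one has
`ζ_s(T_0(τ), T_0(ρ)) ≤ p_{00}^{s/2} ζ_s(τ_0,ρ_0) + (1-p_{00})^{s/2} ζ_s(τ_1,ρ_1)` and
`ζ_s(T_1(τ), T_1(ρ)) ≤ (1-p_{11})^{s/2} ζ_s(τ_0,ρ_0) + p_{11}^{s/2} ζ_s(τ_1,ρ_1)`. -/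
theorem Tmap_component_estimates
    (s : ℝ) (hs : s ∈ Set.Ioc (2 : ℝ) 3)
    (p00 p11 : ℝ) (hp00 : p00 ∈ Set.Ioo (0 : ℝ) 1) (hp11 : p11 ∈ Set.Ioo (0 : ℝ) 1) :
    ∀ τ ρ : Measure ℝ × Measure ℝ,
      MemMs s τ.1 → MemMs s τ.2 → MemMs s ρ.1 → MemMs s ρ.2 →
      zolotarevDist s (Tmap p00 p11 τ).1 (Tmap p00 p11 ρ).1
          ≤ p00 ^ (s / 2) * zolotarevDist s τ.1 ρ.1
            + (1 - p00) ^ (s / 2) * zolotarevDist s τ.2 ρ.2 ∧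
      zolotarevDist s (Tmap p00 p11 τ).2 (Tmap p00 p11 ρ).2
          ≤ (1 - p11) ^ (s / 2) * zolotarevDist s τ.1 ρ.1
            + p11 ^ (s / 2) * zolotarevDist s τ.2 ρ.2 := by
  intro τ ρ hτ₀ hτ₁ hρ₀ hρ₁
  have hq00 : 0 < 1 - p00 := sub_pos.2 hp00.2
  have hq11 : 0 < 1 - p11 := sub_pos.2 hp11.2
  rw [rpow_div_two_eq_sqrt s hp00.1.le, rpow_div_two_eq_sqrt s hq00.le,
    rpow_div_two_eq_sqrt s hp11.1.le, rpow_div_two_eq_sqrt s hq11.le]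
  exact ⟨zolotarevDist_map_linear_prod_le hs.1.le hτ₀ hτ₁ hρ₀ hρ₁ (sqrt_pos.2 hp00.1)
      (sqrt_pos.2 hq00),
    zolotarevDist_map_linear_prod_le hs.1.le hτ₀ hτ₁ hρ₀ hρ₁ (sqrt_pos.2 hq11)
      (sqrt_pos.2 hp11.1)⟩
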